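/- arXiv:1611.05991 — 5 statements merged into one kernel-verified Lean document; each statement's English description precedes it below -/
import Mathlib

section
/- Every graph G on N ≥ 2 vertices with density α (i.e., with at least α·C(N,2) edges) contains at least (α/2)^{t²}·N^{2t} labelled copies of the complete bipartite graph K_{t,t}, for every positive integer t. Here a labelled copy of K_{t,t} is a pair (L,R) of ordered t-tuples of vertices (repetitions allowed within each tuple) such that every u in L and v in R satisfy u ≠ v and uv is an edge of G. -/
open Finset

/-- Alon's lemma: every graph on `N ≥ 2` vertices with at least `α·C(N,2)`
edges contains at least `(α/2)^{t²} · N^{2t}` labelled copies of `K_{t,t}`. -/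
theorem alon_biclique_count {V : Type*} [Fintype V] [DecidableEq V]
    (G : SimpleGraph V) [DecidableRel G.Adj] (α : ℝ) (hα0 : 0 ≤ α) (hα1 : α ≤ 1)
    (hN : 2 ≤ Fintype.card V)
    (hdense : α * ((Fintype.card V).choose 2 : ℝ) ≤ (G.edgeFinset.card : ℝ))
    (t : ℕ) (ht : 0 < t) :
    (α / 2) ^ (t ^ 2) * (Fintype.card V : ℝ) ^ (2 * t)
      ≤ ((Finset.univ.filter (fun LR : (Fin t → V) × (Fin t → V) =>
            ∀ i j, LR.1 i ≠ LR.2 j ∧ G.Adj (LR.1 i) (LR.2 j))).card : ℝ) := by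
  classical
  set N := Fintype.card V with hNdef
  set m := G.edgeFinset.card with hm
  set S : (Fin t → V) → Finset V :=
    fun L => univ.filter (fun u => ∀ i, G.Adj (L i) u) with hS
  -- count formula
  have hcount : (univ.filter (fun LR : (Fin t → V) × (Fin t → V) =>
        ∀ i j, LR.1 i ≠ LR.2 j ∧ G.Adj (LR.1 i) (LR.2 j))).card
      = ∑ L : Fin t → V, (S L).card ^ t := by
    rw [Finset.card_filter, Fintype.sum_prod_type]
    refine Finset.sum_congr rfl (fun L _ => ?_)
    rw [← Finset.card_filter]
    have h1 : (univ.filter fun R : Fin t → V => ∀ i j, L i ≠ R j ∧ G.Adj (L i) (R j))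
        = Fintype.piFinset (fun _ : Fin t => S L) := by
      ext R
      simp only [Finset.mem_filter, Finset.mem_univ, true_and, Fintype.mem_piFinset, hS]
      constructor
      · intro h j; exact fun i => (h i j).2
      · intro h i j; exact ⟨(h j i).ne, h j i⟩
    rw [h1, Fintype.card_piFinset]
    simp
  -- double counting
  have hsum1 : ∑ L : Fin t → V, (S L).card = ∑ u : V, (G.degree u) ^ t := by
    simp_rw [hS, Finset.card_filter]
    rw [Finset.sum_comm]
    refine Finset.sum_congr rfl (fun u _ => ?_)
    rw [← Finset.card_filter]
    have h1 : (univ.filter fun L : Fin t → V => ∀ i, G.Adj (L i) u)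
        = Fintype.piFinset (fun _ : Fin t => G.neighborFinset u) := by
      ext L
      simp [G.adj_comm]
    rw [h1, Fintype.card_piFinset]
    rw [Finset.prod_const, Finset.card_univ, Fintype.card_fin]
    rfl
  have hNpos : (0:ℝ) < (N:ℝ) := by positivity
  have hN2 : (2:ℝ) ≤ (N:ℝ) := by exact_mod_cast hN
  -- degree sum
  have hdeg : (∑ u : V, (G.degree u : ℝ)) = 2 * m := by
    rw [← Nat.cast_sum]
    exact_mod_cast congrArg (Nat.cast (R := ℝ)) (G.sum_degrees_eq_twice_card_edges)
  -- 2m ≥ α N² / 2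
  have hkey : α * (N:ℝ)^2 / 2 ≤ 2 * (m:ℝ) := by
    have hc : ((N.choose 2 : ℕ) : ℝ) = (N:ℝ) * ((N:ℝ) - 1) / 2 := Nat.cast_choose_two ℝ N
    rw [hc] at hdense
    nlinarith [hα0, hα1, hN2, hdense]
  -- first convexity
  have hA : (2 * (m:ℝ)) ^ t / (N:ℝ) ^ (t-1) ≤ ∑ u : V, (G.degree u : ℝ) ^ t := by
    have := pow_sum_div_card_le_sum_pow (s := (univ : Finset V))
      (f := fun u => (G.degree u : ℝ)) (fun i _ => by positivity) (t - 1)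
    rw [Nat.sub_add_cancel ht] at this
    rwa [hdeg, Finset.card_univ] at this
  -- second convexity
  have hB : (∑ u : V, (G.degree u : ℝ) ^ t) ^ t / (N:ℝ) ^ (t*(t-1))
      ≤ ∑ L : Fin t → V, ((S L).card : ℝ) ^ t := by
    have := pow_sum_div_card_le_sum_pow (s := (univ : Finset (Fin t → V)))
      (f := fun L => ((S L).card : ℝ)) (fun i _ => by positivity) (t - 1)
    rw [Nat.sub_add_cancel ht] at this
    rw [Finset.card_univ] at this
    have hcard : (Fintype.card (Fin t → V) : ℝ) = (N:ℝ) ^ t := by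
      rw [Fintype.card_fun]; push_cast; simp [hNdef]
    rw [hcard, ← pow_mul] at this
    have hA' : (∑ L : Fin t → V, ((S L).card : ℝ)) = ∑ u : V, (G.degree u : ℝ) ^ t := by
      rw [← Nat.cast_sum, hsum1]; push_cast; rfl
    rwa [hA'] at this
  have hmain : (2 * (m:ℝ)) ^ (t^2) / (N:ℝ) ^ (2*t*(t-1))
      ≤ ∑ L : Fin t → V, ((S L).card : ℝ) ^ t := by
    refine le_trans ?_ hB
    have h1 : ((2 * (m:ℝ)) ^ t / (N:ℝ) ^ (t-1)) ^ t
        ≤ (∑ u : V, (G.degree u : ℝ) ^ t) ^ t := by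
      apply pow_le_pow_left₀ (by positivity) hA
    have h2 : ((2 * (m:ℝ)) ^ t / (N:ℝ) ^ (t-1)) ^ t / (N:ℝ) ^ (t*(t-1))
        ≤ (∑ u : V, (G.degree u : ℝ) ^ t) ^ t / (N:ℝ) ^ (t*(t-1)) := by
      gcongr
    refine le_trans (le_of_eq ?_) h2
    rw [div_pow, ← pow_mul, ← pow_mul, div_div, ← pow_add]
    congr 1
    · rw [pow_two]
    · ring
  -- finish
  rw [hcount]
  push_cast
  refine le_trans ?_ hmain
  rw [le_div_iff₀ (by positivity), mul_assoc, ← pow_add]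
  have hexp : 2 * t + 2 * t * (t - 1) = 2 * t ^ 2 := by
    obtain ⟨k, rfl⟩ : ∃ k, t = k + 1 := ⟨t - 1, (Nat.sub_add_cancel ht).symm⟩
    simp only [Nat.add_sub_cancel]
    ring
  rw [hexp, pow_mul, ← mul_pow]
  apply pow_le_pow_left₀ (by positivity)
  calc (α / 2) * (N:ℝ)^2 = α * (N:ℝ)^2 / 2 := by ring
    _ ≤ 2 * (m:ℝ) := hkey
end

section
/- Let G be a graph on N vertices, let t ≥ 1, and suppose that the number of labelled copies of K_{t,t} in G (pairs (L,R) ∈ V^t × V^t with every u ∈ L, v ∈ R distinct and adjacent) is at most ρ^{t²} · N^{2t} for some ρ ∈ (0,1]. Then the density of G is at most 2ρ. -/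
open Finset

/-- contrapositive of Alon's lemma: if the number of labelled copies of
`K_{t,t}` in `G` is at most `ρ^{t²} · N^{2t}` for some `ρ ∈ (0,1]`, then the density of `G`
is at most `2ρ`. -/
theorem density_le_of_few_bicliques {V : Type*} [Fintype V] [DecidableEq V]
    (G : SimpleGraph V) [DecidableRel G.Adj] (ρ : ℝ) (hρ0 : 0 < ρ) (hρ1 : ρ ≤ 1)
    (hN : 2 ≤ Fintype.card V) (t : ℕ) (ht : 1 ≤ t)
    (hcopies : ((Finset.univ.filter (fun LR : (Fin t → V) × (Fin t → V) =>
          ∀ i j, LR.1 i ≠ LR.2 j ∧ G.Adj (LR.1 i) (LR.2 j))).card : ℝ)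
        ≤ ρ ^ (t ^ 2) * (Fintype.card V : ℝ) ^ (2 * t)) :
    (G.edgeFinset.card : ℝ) / ((Fintype.card V).choose 2 : ℝ) ≤ 2 * ρ := by
  classical
  obtain ⟨k, rfl⟩ : ∃ k, t = k + 1 := ⟨t - 1, (Nat.succ_pred_eq_of_pos ht).symm⟩
  set t := k + 1 with htdef
  set n := Fintype.card V with hn
  have hn2 : (2:ℝ) ≤ (n:ℝ) := by exact_mod_cast hN
  have hn0 : (0:ℝ) < (n:ℝ) := by linarith
  -- Step A: the copy count equals ∑_L |S L|^t
  have hA : (Finset.univ.filter (fun LR : (Fin t → V) × (Fin t → V) =>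
          ∀ i j, LR.1 i ≠ LR.2 j ∧ G.Adj (LR.1 i) (LR.2 j))).card
      = ∑ L : Fin t → V, (univ.filter (fun v => ∀ i, G.Adj (L i) v)).card ^ t := by
    have h1 : (Finset.univ.filter (fun LR : (Fin t → V) × (Fin t → V) =>
          ∀ i j, LR.1 i ≠ LR.2 j ∧ G.Adj (LR.1 i) (LR.2 j)))
        = Finset.univ.filter (fun LR : (Fin t → V) × (Fin t → V) =>
          ∀ i j, G.Adj (LR.1 i) (LR.2 j)) := by
      apply filter_congr
      intro LR _
      constructor
      · exact fun h i j => (h i j).2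
      · exact fun h i j => ⟨(h i j).ne, h i j⟩
    rw [h1, Finset.card_filter, Fintype.sum_prod_type]
    apply Finset.sum_congr rfl
    intro L _
    have h2 : (∑ R : Fin t → V, if ∀ i j, G.Adj (L i) (R j) then 1 else 0)
        = (Finset.univ.filter (fun R : Fin t → V =>
            ∀ j, R j ∈ univ.filter (fun v => ∀ i, G.Adj (L i) v))).card := by
      rw [Finset.card_filter]
      apply Finset.sum_congr rfl
      intro R _
      congr 1
      simp only [mem_filter, mem_univ, true_and, eq_iff_iff]
      rw [forall_swap]
    rw [h2]
    have h3 : (Finset.univ.filter (fun R : Fin t → V =>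
            ∀ j, R j ∈ univ.filter (fun v => ∀ i, G.Adj (L i) v)))
        = Fintype.piFinset (fun _ : Fin t => univ.filter (fun v => ∀ i, G.Adj (L i) v)) := by
      ext R; simp [Fintype.mem_piFinset]
    rw [h3, Fintype.card_piFinset, Finset.prod_const, Finset.card_univ, Fintype.card_fin]
  -- Step B
  have hB : ∑ L : Fin t → V, (univ.filter (fun v => ∀ i, G.Adj (L i) v)).card
      = ∑ v : V, G.degree v ^ t := by
    simp_rw [Finset.card_filter]
    rw [Finset.sum_comm]
    apply Finset.sum_congr rfl
    intro v _
    have h4 : (∑ L : Fin t → V, if ∀ i, G.Adj (L i) v then 1 else 0)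
        = (Finset.univ.filter (fun L : Fin t → V => ∀ i, L i ∈ G.neighborFinset v)).card := by
      rw [Finset.card_filter]
      apply Finset.sum_congr rfl
      intro L _
      congr 1
      simp [SimpleGraph.mem_neighborFinset, G.adj_comm]
    rw [h4]
    have h5 : (Finset.univ.filter (fun L : Fin t → V => ∀ i, L i ∈ G.neighborFinset v))
        = Fintype.piFinset (fun _ : Fin t => G.neighborFinset v) := by
      ext L; simp [Fintype.mem_piFinset]
    rw [h5, Fintype.card_piFinset, Finset.prod_const, Finset.card_univ, Fintype.card_fin]
    rfl
  -- real quantities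
  set e : ℝ := (G.edgeFinset.card : ℝ) with he
  have he0 : 0 ≤ e := by positivity
  set D : ℝ := 2 * e with hD
  have hD0 : 0 ≤ D := by positivity
  -- Jensen 1
  have hdeg : D ^ t / (n:ℝ) ^ k ≤ ∑ v : V, (G.degree v : ℝ) ^ t := by
    have h := pow_sum_div_card_le_sum_pow (s := (univ : Finset V))
      (f := fun v => (G.degree v : ℝ)) (fun i _ => by positivity) k
    have hsum : ∑ v : V, (G.degree v : ℝ) = D := by
      rw [hD, he, ← Nat.cast_sum, SimpleGraph.sum_degrees_eq_twice_card_edges]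
      push_cast; ring
    rwa [hsum, Finset.card_univ, ← hn] at h
  -- Jensen 2
  have hJ2 : (∑ L : Fin t → V, ((univ.filter (fun v => ∀ i, G.Adj (L i) v)).card : ℝ)) ^ t
      / ((n:ℝ) ^ t) ^ k
      ≤ ∑ L : Fin t → V, ((univ.filter (fun v => ∀ i, G.Adj (L i) v)).card : ℝ) ^ t := by
    have h := pow_sum_div_card_le_sum_pow (s := (univ : Finset (Fin t → V)))
      (f := fun L => ((univ.filter (fun v => ∀ i, G.Adj (L i) v)).card : ℝ))
      (fun i _ => by positivity) k
    rwa [Finset.card_univ, Fintype.card_fun, Fintype.card_fin, ← hn, Nat.cast_pow] at h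
  have hBsum : (∑ L : Fin t → V, ((univ.filter (fun v => ∀ i, G.Adj (L i) v)).card : ℝ))
      = ∑ v : V, (G.degree v : ℝ) ^ t := by
    exact_mod_cast congrArg (Nat.cast : ℕ → ℝ) hB
  -- lower bound for copy count
  have hcount : (D ^ t / (n:ℝ) ^ k) ^ t / ((n:ℝ) ^ t) ^ k
      ≤ ((Finset.univ.filter (fun LR : (Fin t → V) × (Fin t → V) =>
          ∀ i j, LR.1 i ≠ LR.2 j ∧ G.Adj (LR.1 i) (LR.2 j))).card : ℝ) := by
    rw [hA]
    push_cast
    refine le_trans ?_ hJ2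
    gcongr
    rw [hBsum]; exact hdeg
  have h6 : (D ^ t / (n:ℝ) ^ k) ^ t / ((n:ℝ) ^ t) ^ k ≤ ρ ^ (t ^ 2) * (n:ℝ) ^ (2 * t) :=
    hcount.trans hcopies
  have hLHS : (D ^ t / (n:ℝ) ^ k) ^ t / ((n:ℝ) ^ t) ^ k
      = D ^ (t ^ 2) / (n:ℝ) ^ (2 * k * t) := by
    rw [div_pow, ← pow_mul, ← pow_mul, ← pow_mul, div_div, ← pow_add]
    congr 1
    · rw [pow_two]
    · ring
  rw [hLHS, div_le_iff₀ (by positivity)] at h6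
  have hRHS : ρ ^ (t ^ 2) * (n:ℝ) ^ (2 * t) * (n:ℝ) ^ (2 * k * t)
      = (ρ * (n:ℝ) ^ 2) ^ (t ^ 2) := by
    rw [mul_pow, ← pow_mul, mul_assoc, ← pow_add]
    congr 2
    rw [htdef]; ring
  rw [hRHS] at h6
  have hkey : D ≤ ρ * (n:ℝ) ^ 2 := by
    refine le_of_pow_le_pow_left₀ (by positivity) (by positivity) h6
  -- finish
  rw [Nat.cast_choose_two, div_le_iff₀ (by nlinarith)]
  nlinarith [mul_nonneg hρ0.le (mul_nonneg hn0.le (by linarith : (0:ℝ) ≤ (n:ℝ) - 2))]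
end

section
/- Let n ≥ 2 and let A be a finite set whose elements are pairs (x, b) with x ∈ {1,…,n} and b ∈ {0,1}, such that for at least βn values of x both (x,0) ∈ A and (x,1) ∈ A. Let 2 ≤ ℓ ≤ |A|. Then the number of ℓ-element subsets u of A such that for no x both (x,0) ∈ u and (x,1) ∈ u is at most exp(−β·ℓ²/(32n)) · C(|A|, ℓ). -/
/-!
Write `σ (x, b) = (x, !b)`: the sets counted are the `ℓ`-subsets of `A` containing no pair
`{a, σ a}`. Build such pair-free sets one element at a time. A pair-free `k`-set `s` has
`|A| - k - |s ∩ M|` pair-free one-point extensions, where `M = {a ∈ A | σ a ∈ A}`, and every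
pair-free `(k+1)`-set arises in `k + 1` ways. Exchanging an element `e'` with `σ e' ∉ A` for a
matched `e` shows that `e'` lies in at most as many pair-free `k`-sets as `e` and `σ e` together,
so on average `|s ∩ M| ≥ |M| k / (2|A|)`. Hence, compared with all `k`-subsets, the proportion of
pair-free ones shrinks by a factor `1 - |M| k / (2|A|²) ≤ exp (-|M| k / (2|A|²))` at each step,
and the product of these factors is `exp (-|M| k (k-1) / (4|A|²))`. Finally `|M| ≥ 2βn` and
`|A| ≤ 2n`.
-/

open Finset

theorem le_exp_mul_choose_of_succ_mul_le {N : ℕ} {c : ℝ} (hc : 0 ≤ c) {f : ℕ → ℝ}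
    (hf : ∀ k, 0 ≤ f k) (h0 : f 0 ≤ 1)
    (hstep : ∀ k < N, (k + 1) * f (k + 1) ≤ (N - k - c * k / (2 * N)) * f k) :
    ∀ k ≤ N, f k ≤ Real.exp (-c * k * (k - 1) / (4 * N ^ 2)) * N.choose k := by
  intro k
  induction k with
  | zero => simpa using h0
  | succ k ih =>
    intro hk
    have hkN : (k : ℝ) < N := by exact_mod_cast hk
    have hN : (0 : ℝ) < N := (Nat.cast_nonneg k).trans_lt hkN
    set x := c * k / (2 * N ^ 2) with hx
    have hcoeff : (N - k - c * k / (2 * N) : ℝ) ≤ (N - k) * Real.exp (-x) := by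
      have hNx : c * k / (2 * N) = N * x := by rw [hx]; field_simp
      have hkx : (N - k) * x ≤ N * x :=
        mul_le_mul_of_nonneg_right (sub_le_self _ (Nat.cast_nonneg k)) (by positivity)
      nlinarith [Real.add_one_le_exp (-x)]
    have hchoose : (N - k : ℝ) * N.choose k = (k + 1) * N.choose (k + 1) := by
      rw [← Nat.cast_sub (Nat.le_of_succ_le hk)]
      exact_mod_cast by rw [mul_comm, ← Nat.choose_succ_right_eq, mul_comm]
    have hexp : Real.exp (-x) * Real.exp (-c * k * (k - 1) / (4 * N ^ 2))
        = Real.exp (-c * (k + 1 : ℕ) * ((k + 1 : ℕ) - 1) / (4 * N ^ 2)) := by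
      rw [← Real.exp_add, hx]
      push_cast
      congr 1
      ring
    refine le_of_mul_le_mul_left ?_ (by positivity : (0 : ℝ) < k + 1)
    calc (k + 1 : ℝ) * f (k + 1) ≤ (N - k - c * k / (2 * N)) * f k := hstep k hk
      _ ≤ (N - k) * Real.exp (-x) * f k := mul_le_mul_of_nonneg_right hcoeff (hf k)
      _ ≤ (N - k) * Real.exp (-x) * (Real.exp (-c * k * (k - 1) / (4 * N ^ 2)) * N.choose k) := by
        gcongr
        exact ih (Nat.le_of_succ_le hk)
      _ = Real.exp (-x) * Real.exp (-c * k * (k - 1) / (4 * N ^ 2)) * ((N - k) * N.choose k) := by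
        ring
      _ = _ := by rw [hchoose, hexp]; ring

section PairFree

variable {α : Type*} {σ : α → α}

def PairFree (σ : α → α) (s : Finset α) : Prop := ∀ a ∈ s, σ a ∉ s

theorem PairFree.mono {s t : Finset α} (ht : PairFree σ t) (hst : s ⊆ t) : PairFree σ s :=
  fun a ha hσa => ht a (hst ha) (hst hσa)

variable [DecidableEq α]

instance (σ : α → α) : DecidablePred (PairFree σ) := fun s =>
  inferInstanceAs (Decidable (∀ a ∈ s, σ a ∉ s))

theorem PairFree.insert (hσ : Function.Involutive σ) {s : Finset α} {a : α} (hs : PairFree σ s)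
    (haa : σ a ≠ a) (ha : σ a ∉ s) : PairFree σ (insert a s) := by
  intro b hb hσb
  rcases mem_insert.1 hb with rfl | hb <;> rcases mem_insert.1 hσb with h | h
  · exact haa h
  · exact ha h
  · exact ha (by rw [← h, hσ]; exact hb)
  · exact hs b hb h

variable (σ) in
def pairFreeSubsets (A : Finset α) (k : ℕ) : Finset (Finset α) :=
  {s ∈ A.powersetCard k | PairFree σ s}

variable (σ) in
def pairFreeExtensions (A s : Finset α) : Finset α := {a ∈ A \ s | σ a ∉ s}

variable {A s : Finset α} {k : ℕ}

theorem mem_pairFreeSubsets : s ∈ pairFreeSubsets σ A k ↔ s ⊆ A ∧ #s = k ∧ PairFree σ s := by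
  simp [pairFreeSubsets, mem_powersetCard, and_assoc]

theorem card_pairFreeSubsets_zero : #(pairFreeSubsets σ A 0) = 1 := by
  simp [pairFreeSubsets, filter_singleton, PairFree]

theorem card_pairFreeExtensions_add (hσ : Function.Involutive σ) (hsA : s ⊆ A)
    (hs : PairFree σ s) : #(pairFreeExtensions σ A s) + #{a ∈ s | σ a ∈ A} + #s = #A := by
  have hsplit := card_filter_add_card_filter_not (s := A \ s) (fun a => σ a ∉ s)
  have hσs : #{a ∈ A \ s | ¬σ a ∉ s} = #{a ∈ s | σ a ∈ A} := by
    refine card_nbij' σ σ ?_ ?_ (fun a _ => hσ a) (fun a _ => hσ a)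
    · intro a ha
      simp only [mem_coe, mem_filter, mem_sdiff, not_not] at ha ⊢
      exact ⟨ha.2, by rw [hσ]; exact ha.1.1⟩
    · intro a ha
      simp only [mem_coe, mem_filter, mem_sdiff, not_not] at ha ⊢
      exact ⟨⟨ha.2, hs a ha.1⟩, by rw [hσ]; exact ha.1⟩
  rw [pairFreeExtensions, ← hσs, hsplit, card_sdiff_add_card_eq_card hsA]

theorem card_pairFreeSubsets_succ_filter_superset (hσ : Function.Involutive σ) (hne : ∀ a, σ a ≠ a)
    (hs : s ∈ pairFreeSubsets σ A k) :
    #{t ∈ pairFreeSubsets σ A (k + 1) | s ⊆ t} = #(pairFreeExtensions σ A s) := by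
  obtain ⟨hsA, hsk, hsfree⟩ := mem_pairFreeSubsets.1 hs
  symm
  refine card_nbij (fun a => insert a s) ?_ ?_ ?_
  · intro a ha
    simp only [pairFreeExtensions, mem_coe, mem_filter, mem_sdiff] at ha ⊢
    refine ⟨mem_pairFreeSubsets.2 ⟨insert_subset ha.1.1 hsA, ?_, hsfree.insert hσ (hne a) ha.2⟩,
      subset_insert a s⟩
    rw [card_insert_of_notMem ha.1.2, hsk]
  · intro a ha b _ hab
    simp only [pairFreeExtensions, mem_coe, mem_filter, mem_sdiff] at ha
    exact (insert_inj ha.1.2).1 hab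
  · intro t ht
    simp only [mem_coe, mem_filter] at ht
    obtain ⟨htA, htk, htfree⟩ := mem_pairFreeSubsets.1 ht.1
    obtain ⟨a, has, rfl⟩ := exists_eq_insert_iff.2 ⟨ht.2, by rw [hsk, htk]⟩
    refine ⟨a, ?_, rfl⟩
    simp only [pairFreeExtensions, mem_coe, mem_filter, mem_sdiff]
    exact ⟨⟨htA (mem_insert_self a s), has⟩,
      fun h => htfree a (mem_insert_self a s) (mem_insert_of_mem h)⟩

theorem card_pairFreeSubsets_filter_subset {t : Finset α} (ht : t ∈ pairFreeSubsets σ A (k + 1)) :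
    #{s ∈ pairFreeSubsets σ A k | s ⊆ t} = k + 1 := by
  obtain ⟨htA, htk, htfree⟩ := mem_pairFreeSubsets.1 ht
  have : {s ∈ pairFreeSubsets σ A k | s ⊆ t} = t.powersetCard k := by
    ext s
    simp only [mem_filter, mem_pairFreeSubsets, mem_powersetCard]
    exact ⟨fun h => ⟨h.2, h.1.2.1⟩, fun h => ⟨⟨h.1.trans htA, h.2, htfree.mono h.1⟩, h.1⟩⟩
  rw [this, card_powersetCard, htk, Nat.choose_succ_self_right]

theorem succ_mul_card_pairFreeSubsets_succ_add (hσ : Function.Involutive σ) (hne : ∀ a, σ a ≠ a)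
    (A : Finset α) (k : ℕ) :
    (k + 1) * #(pairFreeSubsets σ A (k + 1)) + ∑ s ∈ pairFreeSubsets σ A k, #{a ∈ s | σ a ∈ A}
      + k * #(pairFreeSubsets σ A k) = #A * #(pairFreeSubsets σ A k) := by
  have hdouble := sum_card_bipartiteAbove_eq_sum_card_bipartiteBelow (· ⊆ ·)
    (s := pairFreeSubsets σ A k) (t := pairFreeSubsets σ A (k + 1))
  simp only [bipartiteAbove, bipartiteBelow] at hdouble
  rw [sum_congr rfl fun s hs => card_pairFreeSubsets_succ_filter_superset hσ hne hs,
    sum_congr rfl fun t ht => card_pairFreeSubsets_filter_subset ht, sum_const,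
    smul_eq_mul] at hdouble
  calc _ = ∑ s ∈ pairFreeSubsets σ A k,
        (#(pairFreeExtensions σ A s) + #{a ∈ s | σ a ∈ A} + #s) := by
        rw [sum_add_distrib, sum_add_distrib, hdouble,
          sum_congr rfl fun s hs => (mem_pairFreeSubsets.1 hs).2.1, sum_const, smul_eq_mul]
        ring
    _ = #A * #(pairFreeSubsets σ A k) := by
        rw [sum_congr rfl fun s hs => card_pairFreeExtensions_add hσ (mem_pairFreeSubsets.1 hs).1
          (mem_pairFreeSubsets.1 hs).2.2, sum_const, smul_eq_mul, mul_comm]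

theorem card_pairFreeSubsets_filter_mem_le_add (hσ : Function.Involutive σ) (hne : ∀ a, σ a ≠ a)
    {e e' : α} (he : e ∈ A) (hσe : σ e ∈ A) (hσe' : σ e' ∉ A) :
    #{s ∈ pairFreeSubsets σ A k | e' ∈ s}
      ≤ #{s ∈ pairFreeSubsets σ A k | e ∈ s} + #{s ∈ pairFreeSubsets σ A k | σ e ∈ s} := by
  have hee' : e' ≠ e := fun h => hσe' (h ▸ hσe)
  -- trade `e'` for `e` in the sets that avoid the pair `{e, σ e}`
  let swap (s : Finset α) := if e ∈ s ∨ σ e ∈ s then s else insert e (s.erase e')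
  refine le_trans (card_le_card_of_injOn swap (t := {s ∈ pairFreeSubsets σ A k | e ∈ s ∨ σ e ∈ s})
    ?_ ?_) (by rw [filter_or]; exact card_union_le _ _)
  · intro s hs
    simp only [mem_coe, mem_filter] at hs ⊢
    by_cases hpair : e ∈ s ∨ σ e ∈ s
    · simpa [swap, hpair] using hs.1
    · obtain ⟨hsA, hsk, hsfree⟩ := mem_pairFreeSubsets.1 hs.1
      have he_s : e ∉ s.erase e' := fun h => hpair (.inl (mem_of_mem_erase h))
      simp only [swap, hpair, if_false, mem_insert_self, true_or, and_true]
      refine mem_pairFreeSubsets.2 ⟨insert_subset he ((erase_subset _ _).trans hsA), ?_,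
        (hsfree.mono (erase_subset _ _)).insert hσ (hne e)
          fun h => hpair (.inr (mem_of_mem_erase h))⟩
      rw [card_insert_of_notMem he_s, card_erase_add_one hs.2, hsk]
  · intro s₁ hs₁ s₂ hs₂ h
    simp only [mem_coe, mem_filter] at hs₁ hs₂
    by_cases h₁ : e ∈ s₁ ∨ σ e ∈ s₁ <;> by_cases h₂ : e ∈ s₂ ∨ σ e ∈ s₂ <;>
      simp only [swap, h₁, h₂, if_true, if_false] at h
    · exact h
    · exact absurd (h ▸ hs₁.2) (by simp [hee'])
    · exact absurd (h ▸ hs₂.2) (by simp [hee'])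
    · have := congrArg (fun t => insert e' (t.erase e)) h
      simp only [erase_insert (fun h => h₁ (.inl (mem_of_mem_erase h))),
        erase_insert (fun h => h₂ (.inl (mem_of_mem_erase h))), insert_erase hs₁.2,
        insert_erase hs₂.2] at this
      exact this

theorem card_filter_mul_sum_le (hσ : Function.Involutive σ) (A : Finset α) (w : α → ℕ)
    (hw : ∀ e ∈ A, σ e ∈ A → ∀ e' ∈ A, σ e' ∉ A → w e' ≤ w e + w (σ e)) :
    #{e ∈ A | σ e ∈ A} * ∑ e ∈ A, w e ≤ 2 * #A * ∑ e ∈ A with σ e ∈ A, w e := by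
  set M := {e ∈ A | σ e ∈ A}
  set U := {e ∈ A | σ e ∉ A}
  have hσM : ∑ e ∈ M, w (σ e) = ∑ e ∈ M, w e := by
    refine sum_nbij' σ σ ?_ ?_ (fun a _ => hσ a) (fun a _ => hσ a) (fun _ _ => rfl) <;>
    · intro a ha
      simp only [M, mem_filter] at ha ⊢
      exact ⟨ha.2, by rw [hσ]; exact ha.1⟩
  have hU : ∀ e' ∈ U, #M * w e' ≤ 2 * ∑ e ∈ M, w e := by
    intro e' he'
    simp only [U, mem_filter] at he'
    calc #M * w e' = ∑ _e ∈ M, w e' := by rw [sum_const, smul_eq_mul]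
      _ ≤ ∑ e ∈ M, (w e + w (σ e)) := sum_le_sum fun e he =>
          hw e (mem_filter.1 he).1 (mem_filter.1 he).2 e' he'.1 he'.2
      _ = 2 * ∑ e ∈ M, w e := by rw [sum_add_distrib, hσM]; ring
  have hUsum : #M * ∑ e ∈ U, w e ≤ #U * (2 * ∑ e ∈ M, w e) := by
    rw [mul_sum, ← smul_eq_mul]
    exact sum_le_card_nsmul _ _ _ hU
  have hsum : ∑ e ∈ M, w e + ∑ e ∈ U, w e = ∑ e ∈ A, w e := sum_filter_add_sum_filter_not _ _ _
  have hcard : #M + #U = #A := card_filter_add_card_filter_not _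
  rw [← hsum, ← hcard]
  nlinarith [Nat.zero_le (#M * ∑ e ∈ M, w e)]

theorem card_filter_mul_card_pairFreeSubsets_le (hσ : Function.Involutive σ) (hne : ∀ a, σ a ≠ a)
    (A : Finset α) (k : ℕ) :
    #{a ∈ A | σ a ∈ A} * (k * #(pairFreeSubsets σ A k))
      ≤ 2 * #A * ∑ s ∈ pairFreeSubsets σ A k, #{a ∈ s | σ a ∈ A} := by
  have hdouble (B : Finset α) :
      ∑ e ∈ B, #{s ∈ pairFreeSubsets σ A k | e ∈ s} = ∑ s ∈ pairFreeSubsets σ A k, #(B ∩ s) := by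
    simpa only [bipartiteAbove, bipartiteBelow, filter_mem_eq_inter] using
      sum_card_bipartiteAbove_eq_sum_card_bipartiteBelow (· ∈ ·) (s := B)
        (t := pairFreeSubsets σ A k)
  have hA : ∑ s ∈ pairFreeSubsets σ A k, #(A ∩ s) = k * #(pairFreeSubsets σ A k) := by
    rw [sum_congr rfl fun s hs => by rw [inter_eq_right.2 (mem_pairFreeSubsets.1 hs).1,
      (mem_pairFreeSubsets.1 hs).2.1], sum_const, smul_eq_mul, mul_comm]
  have hM : ∑ s ∈ pairFreeSubsets σ A k, #({a ∈ A | σ a ∈ A} ∩ s)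
      = ∑ s ∈ pairFreeSubsets σ A k, #{a ∈ s | σ a ∈ A} := by
    refine sum_congr rfl fun s hs => congrArg card ?_
    rw [filter_inter, inter_eq_right.2 (mem_pairFreeSubsets.1 hs).1]
  rw [← hA, ← hM, ← hdouble, ← hdouble]
  refine card_filter_mul_sum_le hσ A _ fun e he hσe e' _ hσe' => ?_
  exact card_pairFreeSubsets_filter_mem_le_add hσ hne he hσe hσe'

theorem succ_mul_card_pairFreeSubsets_succ_le (hσ : Function.Involutive σ) (hne : ∀ a, σ a ≠ a)
    (A : Finset α) (k : ℕ) :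
    (k + 1 : ℝ) * #(pairFreeSubsets σ A (k + 1)) ≤
      (#A - k - #{a ∈ A | σ a ∈ A} * k / (2 * #A)) * #(pairFreeSubsets σ A k) := by
  set J := ∑ s ∈ pairFreeSubsets σ A k, #{a ∈ s | σ a ∈ A}
  have hrec : (k + 1 : ℝ) * #(pairFreeSubsets σ A (k + 1)) + J + k * #(pairFreeSubsets σ A k)
      = #A * #(pairFreeSubsets σ A k) := by
    exact_mod_cast succ_mul_card_pairFreeSubsets_succ_add hσ hne A k
  have havg : (#{a ∈ A | σ a ∈ A} : ℝ) * (k * #(pairFreeSubsets σ A k)) ≤ 2 * #A * J := by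
    exact_mod_cast card_filter_mul_card_pairFreeSubsets_le hσ hne A k
  have hJ : (#{a ∈ A | σ a ∈ A} * k / (2 * #A) : ℝ) * #(pairFreeSubsets σ A k) ≤ J := by
    rcases (Nat.zero_le #A).eq_or_lt with hA | hA
    · simp [← hA]
    · rw [div_mul_eq_mul_div, div_le_iff₀ (by positivity)]
      linarith
  linarith

theorem card_pairFreeSubsets_le (hσ : Function.Involutive σ) (hne : ∀ a, σ a ≠ a) (A : Finset α)
    (hk : k ≤ #A) :
    (#(pairFreeSubsets σ A k) : ℝ) ≤
      Real.exp (-#{a ∈ A | σ a ∈ A} * k * (k - 1) / (4 * #A ^ 2)) * (#A).choose k :=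
  le_exp_mul_choose_of_succ_mul_le (f := fun k => #(pairFreeSubsets σ A k)) (Nat.cast_nonneg _)
    (fun _ => Nat.cast_nonneg _) (by simp [card_pairFreeSubsets_zero])
    (fun k _ => succ_mul_card_pairFreeSubsets_succ_le hσ hne A k) k hk

end PairFree

section FlipSnd

variable {ι : Type*}

def flipSnd (p : ι × Bool) : ι × Bool := (p.1, !p.2)

theorem flipSnd_involutive : Function.Involutive (flipSnd (ι := ι)) := fun p => by
  simp [flipSnd]

theorem flipSnd_ne (p : ι × Bool) : flipSnd p ≠ p := fun h => by
  simpa [flipSnd] using congrArg Prod.snd h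

variable [DecidableEq ι] (A : Finset (ι × Bool))

theorem filter_powersetCard_eq_pairFreeSubsets_flipSnd (ℓ : ℕ)
    [DecidablePred fun u : Finset (ι × Bool) => ∀ x, ¬ ((x, false) ∈ u ∧ (x, true) ∈ u)] :
    (A.powersetCard ℓ).filter (fun u => ∀ x, ¬ ((x, false) ∈ u ∧ (x, true) ∈ u))
      = pairFreeSubsets flipSnd A ℓ := by
  refine filter_congr fun u _ => ⟨fun h ⟨x, b⟩ hx hσx => ?_, fun h x hx => h _ hx.1 hx.2⟩
  cases b
  exacts [h x ⟨hx, hσx⟩, h x ⟨hσx, hx⟩]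

theorem card_filter_flipSnd_mem [Fintype ι] :
    #{p ∈ A | flipSnd p ∈ A} = 2 * #{x | (x, false) ∈ A ∧ (x, true) ∈ A} := by
  have : ({p ∈ A | flipSnd p ∈ A} : Finset (ι × Bool)) =
      ({x | (x, false) ∈ A ∧ (x, true) ∈ A} : Finset ι) ×ˢ (univ : Finset Bool) := by
    ext ⟨x, b⟩
    rw [mem_filter]
    cases b <;> simp [flipSnd, and_comm]
  rw [this, card_product, card_univ, Fintype.card_bool, mul_comm]

end FlipSnd

theorem count_consistent_subsets_le_general {n : ℕ} (A : Finset (Fin n × Bool))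
    (β : ℝ) (hβ0 : 0 < β)
    (hmany : β * n ≤ ((Finset.univ.filter
        (fun x : Fin n => (x, false) ∈ A ∧ (x, true) ∈ A)).card : ℝ))
    (ℓ : ℕ) (hℓ2 : 2 ≤ ℓ) (hℓA : ℓ ≤ A.card) :
    (((A.powersetCard ℓ).filter
        (fun u => ∀ x : Fin n, ¬ ((x, false) ∈ u ∧ (x, true) ∈ u))).card : ℝ)
      ≤ Real.exp (-β * ℓ ^ 2 / (32 * n)) * (A.card.choose ℓ : ℝ) := by
  rw [filter_powersetCard_eq_pairFreeSubsets_flipSnd]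
  refine (card_pairFreeSubsets_le flipSnd_involutive flipSnd_ne A hℓA).trans
    (mul_le_mul_of_nonneg_right (Real.exp_le_exp.2 ?_) (Nat.cast_nonneg _))
  rw [card_filter_flipSnd_mem, Nat.cast_mul, Nat.cast_two]
  have hN : (#A : ℝ) ≤ 2 * n := by exact_mod_cast (card_le_univ A).trans_eq (by simp [mul_comm])
  have hℓ : (2 : ℝ) ≤ ℓ := by exact_mod_cast hℓ2
  have hℓN : (ℓ : ℝ) ≤ #A := by exact_mod_cast hℓA
  have hA : (0 : ℝ) < #A := by linarith
  have hn : (0 : ℝ) < n := by linarith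
  rw [neg_mul, neg_mul, neg_mul, neg_div, neg_div, neg_le_neg_iff,
    div_le_div_iff₀ (by positivity) (by positivity)]
  -- `|M| ℓ (ℓ - 1) / (4 |A|²) ≥ 2 β n ℓ (ℓ - 1) / (16 n²) ≥ β ℓ² / (32 n)` as `ℓ ≥ 2`
  nlinarith [mul_le_mul_of_nonneg_left hmany
      (mul_nonneg (by positivity) (by linarith) : (0 : ℝ) ≤ 64 * n * ℓ * (ℓ - 1)),
    mul_le_mul_of_nonneg_left (mul_le_mul hN hN hA.le (by positivity))
      (by positivity : (0 : ℝ) ≤ 4 * β * ℓ ^ 2),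
    mul_nonneg (by positivity : (0 : ℝ) ≤ β * n ^ 2 * ℓ) (by linarith : (0 : ℝ) ≤ 3 * ℓ - 4)]

/-- if for at least `βn` variables `x` both `(x,0)` and `(x,1)` lie in `A`,
then the number of `ℓ`-subsets of `A` containing no such complementary pair is at most
`exp(−β ℓ²/(32 n)) · C(|A|, ℓ)`. -/
theorem count_consistent_subsets_le {n : ℕ} (hn : 2 ≤ n) (A : Finset (Fin n × Bool))
    (β : ℝ) (hβ0 : 0 < β) (hβ1 : β ≤ 1)
    (hmany : β * n ≤ ((Finset.univ.filter
        (fun x : Fin n => (x, false) ∈ A ∧ (x, true) ∈ A)).card : ℝ))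
    (ℓ : ℕ) (hℓ2 : 2 ≤ ℓ) (hℓA : ℓ ≤ A.card) :
    (((A.powersetCard ℓ).filter
        (fun u => ∀ x : Fin n, ¬ ((x, false) ∈ u ∧ (x, true) ∈ u))).card : ℝ)
      ≤ Real.exp (-β * ℓ ^ 2 / (32 * n)) * (A.card.choose ℓ : ℝ) :=
  count_consistent_subsets_le_general A β hβ0 hmany ℓ hℓ2 hℓA
end

section
/- Fix a 3SAT formula φ over n boolean variables and an integer 1 ≤ ℓ ≤ n. Define the graph G_{φ,ℓ} whose vertices are consistent partial assignments to exactly ℓ distinct variables, with an edge between two vertices iff their partial assignments are mutually consistent and every clause of φ all of whose variables are assigned by the union of the two partial assignments is satisfied. If φ is satisfiable, then G_{φ,ℓ} contains a clique of size C(n,ℓ). -/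
open Finset

/-- A partial assignment to exactly `ℓ` distinct variables, encoded as a set of
(variable, bit) pairs of size `ℓ` assigning each variable at most one bit. -/
def IsVertex {n : ℕ} (ℓ : ℕ) (u : Finset (Fin n × Bool)) : Prop :=
  u.card = ℓ ∧ ∀ x b b', (x, b) ∈ u → (x, b') ∈ u → b = b'

/-- Two partial assignments `u, v` are adjacent in `G_{φ,ℓ}`: they are mutually consistent,
and every clause of `φ` all of whose variables are assigned by `u ∪ v` is satisfied by the
induced partial assignment. Clauses are sets of literals `(x, b)`. -/
def Adjacent {n : ℕ} (φ : Finset (Finset (Fin n × Bool)))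
    (u v : Finset (Fin n × Bool)) : Prop :=
  (∀ x b b', (x, b) ∈ u → (x, b') ∈ v → b = b') ∧
  (∀ C ∈ φ, (∀ l ∈ C, ∃ b', (l.1, b') ∈ u ∪ v) → ∃ l ∈ C, l ∈ u ∪ v)

/-- if a 3SAT formula `φ` is satisfiable, then the graph `G_{φ,ℓ}` contains
a clique of size `C(n,ℓ)`. -/
theorem clique_of_satisfiable {n : ℕ} (φ : Finset (Finset (Fin n × Bool)))
    (h3 : ∀ C ∈ φ, C.card ≤ 3) (ℓ : ℕ) (hℓ1 : 1 ≤ ℓ) (hℓn : ℓ ≤ n)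
    (hsat : ∃ f : Fin n → Bool, ∀ C ∈ φ, ∃ l ∈ C, f l.1 = l.2) :
    ∃ S : Finset (Finset (Fin n × Bool)),
      S.card = n.choose ℓ ∧ (∀ u ∈ S, IsVertex ℓ u) ∧
      ∀ u ∈ S, ∀ v ∈ S, u ≠ v → Adjacent φ u v := by
  obtain ⟨f, hf⟩ := hsat
  set g : Finset (Fin n) → Finset (Fin n × Bool) := fun A => A.image (fun x => (x, f x)) with hg
  refine ⟨(Finset.univ.powersetCard ℓ).image g, ?_, ?_, ?_⟩
  · rw [Finset.card_image_of_injective _ ?_, Finset.card_powersetCard, Finset.card_univ,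
      Fintype.card_fin]
    intro A B hAB
    have : ∀ (A B : Finset (Fin n)), g A = g B → A ⊆ B := by
      intro A B h x hx
      have : (x, f x) ∈ g B := by rw [← h]; exact Finset.mem_image_of_mem _ hx
      obtain ⟨y, hy, hyx⟩ := Finset.mem_image.mp this
      cases hyx; exact hy
    exact Finset.Subset.antisymm (this A B hAB) (this B A hAB.symm)
  · intro u hu
    obtain ⟨A, hA, rfl⟩ := Finset.mem_image.mp hu
    constructor
    · rw [Finset.card_image_of_injective _ (fun x y h => (Prod.mk.injEq ..).mp h |>.1),
        (Finset.mem_powersetCard.mp hA).2]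
    · intro x b b' hb hb'
      obtain ⟨y, _, hy⟩ := Finset.mem_image.mp hb
      obtain ⟨z, _, hz⟩ := Finset.mem_image.mp hb'
      cases hy; cases hz; rfl
  · intro u hu v hv _
    obtain ⟨A, _, rfl⟩ := Finset.mem_image.mp hu
    obtain ⟨B, _, rfl⟩ := Finset.mem_image.mp hv
    have key : ∀ x b, (x, b) ∈ g A ∪ g B → b = f x := by
      intro x b hx
      rcases Finset.mem_union.mp hx with h | h <;>
      · obtain ⟨y, _, hy⟩ := Finset.mem_image.mp h
        cases hy; rfl
    constructor
    · intro x b b' hb hb'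
      rw [key x b (Finset.mem_union_left _ hb), key x b' (Finset.mem_union_right _ hb')]
    · intro C hC hall
      obtain ⟨l, hl, hfl⟩ := hf C hC
      obtain ⟨b', hb'⟩ := hall l hl
      refine ⟨l, hl, ?_⟩
      have := key l.1 b' hb'
      subst this
      rw [hfl, Prod.mk.eta] at hb'; exact hb'
end

section
/- Let Σ be a finite alphabet with |Σ| ≥ 3, and let d, n, ℓ be positive integers with ℓ ≤ n/(6(d+2)). Then |Σ|^ℓ · C(n/2 − (d+1)ℓ, ℓ) ≥ C(n, ℓ). -/
/-- for an alphabet `Sig` with `|Σ| ≥ 3`, even `n`, and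
`ℓ ≤ n/(6(d+2))` with `n/2 − (d+1)ℓ ≥ ℓ`, one has
`|Σ|^ℓ · C(n/2 − (d+1)ℓ, ℓ) ≥ C(n, ℓ)`. -/
theorem biclique_side_count (Sig : Type*) [Fintype Sig] (hSig : 3 ≤ Fintype.card Sig)
    (d n ℓ : ℕ) (hd : 0 < d) (hℓ : 0 < ℓ) (hn : 0 < n) (heven : Even n)
    (hℓn : 6 * (d + 2) * ℓ ≤ n) (hroom : (d + 1) * ℓ + ℓ ≤ n / 2) :
    n.choose ℓ ≤ Fintype.card Sig ^ ℓ * (n / 2 - (d + 1) * ℓ).choose ℓ := by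
  have hD : 6 * ((d + 1) * ℓ + ℓ) ≤ n := by nlinarith
  have h2 : n / 2 * 2 = n := Nat.div_mul_cancel heven.two_dvd
  set D := (d + 1) * ℓ with hDdef
  set m := n / 2 - D with hm
  -- key: C(n,ℓ) ≤ 3^ℓ * C(m,ℓ)
  have key : n.choose ℓ ≤ 3 ^ ℓ * m.choose ℓ := by
    have hdesc : n.descFactorial ℓ ≤ 3 ^ ℓ * m.descFactorial ℓ := by
      rw [Nat.descFactorial_eq_prod_range, Nat.descFactorial_eq_prod_range]
      calc ∏ i ∈ Finset.range ℓ, (n - i) ≤ ∏ i ∈ Finset.range ℓ, 3 * (m - i) := by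
            refine Finset.prod_le_prod' ?_
            intro i hi
            have hi' : i < ℓ := Finset.mem_range.mp hi
            omega
        _ = 3 ^ ℓ * ∏ i ∈ Finset.range ℓ, (m - i) := by
            rw [Finset.prod_mul_distrib, Finset.prod_const, Finset.card_range]
    have h1 : Nat.factorial ℓ * n.choose ℓ ≤ Nat.factorial ℓ * (3 ^ ℓ * m.choose ℓ) := by
      calc Nat.factorial ℓ * n.choose ℓ = n.descFactorial ℓ :=
            (Nat.descFactorial_eq_factorial_mul_choose n ℓ).symm
        _ ≤ 3 ^ ℓ * m.descFactorial ℓ := hdesc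
        _ = 3 ^ ℓ * (Nat.factorial ℓ * m.choose ℓ) := by
            rw [Nat.descFactorial_eq_factorial_mul_choose]
        _ = Nat.factorial ℓ * (3 ^ ℓ * m.choose ℓ) := by ring
    exact Nat.le_of_mul_le_mul_left h1 (Nat.factorial_pos ℓ)
  refine le_trans key ?_
  gcongr
end
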